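/- Let g, Δx ≠ 0, A₁, A₂, A₃ ∈ ℝ and define p(x) = A₁x² + A₂x + A₃, ρ(x) = (2A₁x + A₂)/g. Then for any grid x_{i+1/2} = (i+1/2)Δx with cell centers x_i = iΔx, the point values p_{i±1/2} = p(x_{i±1/2}), ρ_{i±1/2} = ρ(x_{i±1/2}) and cell averages p̄_i = (1/Δx)∫_{x_{i−1/2}}^{x_{i+1/2}} p dx, ρ̄_i = (1/Δx)∫_{x_{i−1/2}}^{x_{i+1/2}} ρ dx satisfy the discrete well-balance relations: ρ̄_i = (ρ_{i+1/2}+ρ_{i−1/2})/2, (p_{i+1/2}−p_{i−1/2})/Δx = g(ρ_{i−1/2}+ρ_{i+1/2})/2, and (p̄_{i+1}−p̄_i)/Δx = g(ρ_{i+3/2}+4ρ_{i+1/2}+ρ_{i−1/2})/6. -/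

import Mathlib

/-! Cell averages of polynomials of degree ≤ 2 are explicit: over a cell of width `h` centred
at `c`, a linear function averages to its value at `c`, and a quadratic `c₂ x² + c₁ x + c₀`
to its value at `c` plus `c₂ h² / 12`. The constant offset cancels in differences of
neighbouring averages, so all three relations reduce to polynomial identities in the cell
index, using `p' = g ρ` and the linearity of `ρ`. -/

lemma integral_linear (c₁ c₀ a b : ℝ) :
    ∫ x in a..b, c₁ * x + c₀ = c₁ * (b ^ 2 - a ^ 2) / 2 + c₀ * (b - a) := by
  have hlin : IntervalIntegrable (fun x : ℝ => c₁ * x) MeasureTheory.volume a b :=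
    (continuous_const.mul continuous_id).intervalIntegrable a b
  rw [intervalIntegral.integral_add hlin intervalIntegrable_const,
    intervalIntegral.integral_const_mul, integral_id, intervalIntegral.integral_const, smul_eq_mul]
  ring

lemma integral_quadratic (c₂ c₁ c₀ a b : ℝ) :
    ∫ x in a..b, c₂ * x ^ 2 + c₁ * x + c₀
      = c₂ * (b ^ 3 - a ^ 3) / 3 + c₁ * (b ^ 2 - a ^ 2) / 2 + c₀ * (b - a) := by
  have hsq : IntervalIntegrable (fun x : ℝ => c₂ * x ^ 2) MeasureTheory.volume a b :=
    (continuous_const.mul (continuous_pow 2)).intervalIntegrable a b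
  have hlin : IntervalIntegrable (fun x : ℝ => c₁ * x + c₀) MeasureTheory.volume a b :=
    ((continuous_const.mul continuous_id).add continuous_const).intervalIntegrable a b
  simp_rw [add_assoc]
  rw [intervalIntegral.integral_add hsq hlin, intervalIntegral.integral_const_mul, integral_pow,
    integral_linear]
  ring

lemma cell_average_linear (c₁ c₀ c h : ℝ) (hh : h ≠ 0) :
    (1 / h) * ∫ x in (c - h / 2)..(c + h / 2), c₁ * x + c₀ = c₁ * c + c₀ := by
  rw [integral_linear]
  field_simp
  ring

lemma cell_average_quadratic (c₂ c₁ c₀ c h : ℝ) (hh : h ≠ 0) :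
    (1 / h) * ∫ x in (c - h / 2)..(c + h / 2), c₂ * x ^ 2 + c₁ * x + c₀
      = c₂ * c ^ 2 + c₁ * c + c₀ + c₂ * h ^ 2 / 12 := by
  rw [integral_quadratic]
  field_simp
  ring

/-- A hydrostatic state with quadratic pressure p = A₁x² + A₂x + A₃ and linear
density ρ = (2A₁x + A₂)/g, sampled into point values and cell averages on a uniform
grid, satisfies the discrete well-balance relations of the Active Flux scheme. -/
theorem stmt_16 (g Δx A₁ A₂ A₃ : ℝ) (hg : g ≠ 0) (hΔx : Δx ≠ 0)
    (p ρ : ℝ → ℝ)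
    (hp : p = fun x => A₁ * x ^ 2 + A₂ * x + A₃)
    (hρ : ρ = fun x => (2 * A₁ * x + A₂) / g)
    (xh : ℤ → ℝ) (hxh : xh = fun (i : ℤ) => ((i : ℝ) + 1 / 2) * Δx)
    (pbar ρbar : ℤ → ℝ)
    (hpbar : pbar = fun i => (1 / Δx) * ∫ x in (xh (i - 1))..(xh i), p x)
    (hρbar : ρbar = fun i => (1 / Δx) * ∫ x in (xh (i - 1))..(xh i), ρ x) :
    ∀ i : ℤ,
      ρbar i = (ρ (xh i) + ρ (xh (i - 1))) / 2 ∧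
      (p (xh i) - p (xh (i - 1))) / Δx = g * (ρ (xh (i - 1)) + ρ (xh i)) / 2 ∧
      (pbar (i + 1) - pbar i) / Δx
        = g * (ρ (xh (i + 1)) + 4 * ρ (xh i) + ρ (xh (i - 1))) / 6 := by
  have hleft (j : ℤ) : xh (j - 1) = j * Δx - Δx / 2 := by rw [hxh]; push_cast; ring
  have hright (j : ℤ) : xh j = j * Δx + Δx / 2 := by rw [hxh]; ring
  have hρ_linear : ρ = fun x => 2 * A₁ / g * x + A₂ / g := by rw [hρ]; ext; ring
  have hpbar_centre (j : ℤ) : pbar j = p (j * Δx) + A₁ * Δx ^ 2 / 12 := by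
    rw [hpbar, hp]
    dsimp only
    rw [hleft, hright]
    exact cell_average_quadratic _ _ _ _ _ hΔx
  have hρbar_centre (j : ℤ) : ρbar j = ρ (j * Δx) := by
    rw [hρbar, hρ_linear]
    dsimp only
    rw [hleft, hright]
    exact cell_average_linear _ _ _ _ hΔx
  intro i
  refine ⟨?_, ?_, ?_⟩
  · rw [hρbar_centre, hleft, hright, hρ_linear]
    ring
  · rw [hleft, hright, hp, hρ]
    field_simp
    ring
  · rw [hpbar_centre, hpbar_centre, hleft, hright, hright, hp, hρ]
    push_cast
    field_simp
    ring
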